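/- arXiv:2008.00967 — 4 statements merged into one kernel-verified Lean document; each statement's English description precedes it below -/
import Mathlib

section
/- Let f : ℝ² → ℝ be smooth, let a^f(x,y,p) = f_xx(x,y) + 2f_xy(x,y)p + f_yy(x,y)p², and let I(x,y,p) = (a^f)_x(x,y,p) + p·(a^f)_y(x,y,p) be the inflection function of a^f. Then ∂I/∂p (0,0,0) = 0 if and only if (a^f)_y(0,0,0) = 0 (equivalently, f_xxy(0,0) = 0); that is, the flec-surface of a^f has vertical tangent plane at the origin if and only if (a^f)_y(0,0,0) = 0. -/
noncomputable section

/-- Partial derivative in the first variable of a function on `ℝ × ℝ`. -/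
def pdx (f : ℝ × ℝ → ℝ) (q : ℝ × ℝ) : ℝ := deriv (fun t => f (t, q.2)) q.1

/-- Partial derivative in the second variable of a function on `ℝ × ℝ`. -/
def pdy (f : ℝ × ℝ → ℝ) (q : ℝ × ℝ) : ℝ := deriv (fun t => f (q.1, t)) q.2

/-- Partial derivative in `x` of a function on `ℝ × ℝ × ℝ` (coordinates `(x, y, p)`). -/
def pDx (F : ℝ × ℝ × ℝ → ℝ) (q : ℝ × ℝ × ℝ) : ℝ := deriv (fun t => F (t, q.2.1, q.2.2)) q.1

/-- Partial derivative in `y` of a function on `ℝ × ℝ × ℝ` (coordinates `(x, y, p)`). -/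
def pDy (F : ℝ × ℝ × ℝ → ℝ) (q : ℝ × ℝ × ℝ) : ℝ := deriv (fun t => F (q.1, t, q.2.2)) q.2.1

/-- Partial derivative in `p` of a function on `ℝ × ℝ × ℝ` (coordinates `(x, y, p)`). -/
def pDp (F : ℝ × ℝ × ℝ → ℝ) (q : ℝ × ℝ × ℝ) : ℝ := deriv (fun t => F (q.1, q.2.1, t)) q.2.2

/-- The asymptotic IDE function `a^f(x,y,p) = f_xx + 2 f_xy p + f_yy p²`. -/
def aIDE (f : ℝ × ℝ → ℝ) (q : ℝ × ℝ × ℝ) : ℝ :=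
  pdx (pdx f) (q.1, q.2.1) + 2 * pdy (pdx f) (q.1, q.2.1) * q.2.2
    + pdy (pdy f) (q.1, q.2.1) * q.2.2 ^ 2

/-- The inflection function `I^F(x,y,p) = F_x + p·F_y`; its zero set is the flec-surface. -/
def inflFun (F : ℝ × ℝ × ℝ → ℝ) (q : ℝ × ℝ × ℝ) : ℝ := pDx F q + q.2.2 * pDy F q

/- The function `a^f` is a quadratic polynomial in `p` whose coefficients are the second partials
of `f`, so along the `p`-axis `∂I/∂p = ∂(a_x)/∂p + a_y + p ∂(a_y)/∂p`. At the origin the first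
term is `2 f_xyx`, the second is `f_xxy` and the third vanishes; by Schwarz's theorem
`f_xyx = f_xxy`, hence `∂I/∂p (0) = 3 f_xxy(0) = 3 (a^f)_y(0)`. -/

section PartialDerivatives

variable {g : ℝ × ℝ → ℝ} {q : ℝ × ℝ}

lemma hasDerivAt_fderiv_fst (hg : DifferentiableAt ℝ g q) :
    HasDerivAt (fun t => g (t, q.2)) (fderiv ℝ g q (1, 0)) q.1 :=
  (hg.hasFDerivAt.comp_hasDerivAt (l := g) q.1
    ((hasDerivAt_id q.1).prodMk (hasDerivAt_const q.1 q.2))).congr_deriv (by simp)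

lemma hasDerivAt_fderiv_snd (hg : DifferentiableAt ℝ g q) :
    HasDerivAt (fun t => g (q.1, t)) (fderiv ℝ g q (0, 1)) q.2 :=
  (hg.hasFDerivAt.comp_hasDerivAt (l := g) q.2
    ((hasDerivAt_const q.2 q.1).prodMk (hasDerivAt_id q.2))).congr_deriv (by simp)

lemma pdx_eq_fderiv (hg : DifferentiableAt ℝ g q) : pdx g q = fderiv ℝ g q (1, 0) :=
  (hasDerivAt_fderiv_fst hg).deriv

lemma pdy_eq_fderiv (hg : DifferentiableAt ℝ g q) : pdy g q = fderiv ℝ g q (0, 1) :=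
  (hasDerivAt_fderiv_snd hg).deriv

lemma hasDerivAt_pdx (hg : DifferentiableAt ℝ g q) :
    HasDerivAt (fun t => g (t, q.2)) (pdx g q) q.1 :=
  pdx_eq_fderiv hg ▸ hasDerivAt_fderiv_fst hg

lemma hasDerivAt_pdy (hg : DifferentiableAt ℝ g q) :
    HasDerivAt (fun t => g (q.1, t)) (pdy g q) q.2 :=
  pdy_eq_fderiv hg ▸ hasDerivAt_fderiv_snd hg

variable {m n : WithTop ℕ∞}

lemma contDiff_pdx (hg : ContDiff ℝ n g) (hmn : m + 1 ≤ n) : ContDiff ℝ m (pdx g) := by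
  have hg' : Differentiable ℝ g := (hg.of_le (le_add_self.trans hmn)).differentiable one_ne_zero
  rw [show pdx g = fun q => fderiv ℝ g q (1, 0) from funext fun q => pdx_eq_fderiv (hg' q)]
  exact (hg.fderiv_right hmn).clm_apply contDiff_const

lemma contDiff_pdy (hg : ContDiff ℝ n g) (hmn : m + 1 ≤ n) : ContDiff ℝ m (pdy g) := by
  have hg' : Differentiable ℝ g := (hg.of_le (le_add_self.trans hmn)).differentiable one_ne_zero
  rw [show pdy g = fun q => fderiv ℝ g q (0, 1) from funext fun q => pdy_eq_fderiv (hg' q)]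
  exact (hg.fderiv_right hmn).clm_apply contDiff_const

lemma pdx_pdy_comm (hg : ContDiff ℝ 2 g) (q : ℝ × ℝ) : pdx (pdy g) q = pdy (pdx g) q := by
  have hg' : Differentiable ℝ g := hg.differentiable two_ne_zero
  have hDg : Differentiable ℝ (fderiv ℝ g) :=
    (hg.fderiv_right (m := 1) (by norm_num)).differentiable one_ne_zero
  have hDgv (v : ℝ × ℝ) : DifferentiableAt ℝ (fun a => fderiv ℝ g a v) q :=
    (hDg q).clm_apply (differentiableAt_const v)
  rw [show pdy g = fun a => fderiv ℝ g a (0, 1) from funext fun a => pdy_eq_fderiv (hg' a),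
    show pdx g = fun a => fderiv ℝ g a (1, 0) from funext fun a => pdx_eq_fderiv (hg' a),
    pdx_eq_fderiv (hDgv _), pdy_eq_fderiv (hDgv _),
    fderiv_clm_apply (hDg q) (differentiableAt_const _),
    fderiv_clm_apply (hDg q) (differentiableAt_const _)]
  simpa using (hg.contDiffAt.isSymmSndFDerivAt (by simp)).eq (1, 0) (0, 1)

end PartialDerivatives

lemma hasDerivAt_quadratic (a b c s : ℝ) :
    HasDerivAt (fun t => a + b * t + c * t ^ 2) (b + 2 * c * s) s :=
  (((hasDerivAt_id s).const_mul b).const_add a |>.add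
    ((hasDerivAt_pow 2 s).const_mul c)).congr_deriv
      (by simp only [mul_one, Nat.cast_ofNat, Nat.add_one_sub_one, pow_one]; ring)

lemma pDp_inflFun {F : ℝ × ℝ × ℝ → ℝ} {x y p a b : ℝ}
    (hx : HasDerivAt (fun t => pDx F (x, y, t)) a p)
    (hy : HasDerivAt (fun t => pDy F (x, y, t)) b p) :
    pDp (inflFun F) (x, y, p) = a + (pDy F (x, y, p) + p * b) :=
  ((hx.add ((hasDerivAt_id p).mul hy)).congr_deriv (by simp)).deriv

section AsymptoticIDE

variable {f : ℝ × ℝ → ℝ}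

lemma contDiff_second_partials (hf : ContDiff ℝ 3 f) :
    ContDiff ℝ 1 (pdx (pdx f)) ∧ ContDiff ℝ 1 (pdy (pdx f)) ∧ ContDiff ℝ 1 (pdy (pdy f)) :=
  have hx : ContDiff ℝ 2 (pdx f) := contDiff_pdx hf (by norm_num)
  ⟨contDiff_pdx hx le_rfl, contDiff_pdy hx le_rfl,
    contDiff_pdy (contDiff_pdy hf (by norm_num)) le_rfl⟩

lemma pDx_aIDE (hf : ContDiff ℝ 3 f) (x y p : ℝ) :
    pDx (aIDE f) (x, y, p) = pdx (pdx (pdx f)) (x, y) + 2 * pdx (pdy (pdx f)) (x, y) * p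
      + pdx (pdy (pdy f)) (x, y) * p ^ 2 := by
  obtain ⟨hxx, hxy, hyy⟩ := contDiff_second_partials hf
  replace hxx := hasDerivAt_pdx (q := (x, y)) (hxx.differentiable one_ne_zero _)
  replace hxy := hasDerivAt_pdx (q := (x, y)) (hxy.differentiable one_ne_zero _)
  replace hyy := hasDerivAt_pdx (q := (x, y)) (hyy.differentiable one_ne_zero _)
  exact ((hxx.add ((hxy.const_mul 2).mul_const p)).add (hyy.mul_const (p ^ 2))).deriv

lemma pDy_aIDE (hf : ContDiff ℝ 3 f) (x y p : ℝ) :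
    pDy (aIDE f) (x, y, p) = pdy (pdx (pdx f)) (x, y) + 2 * pdy (pdy (pdx f)) (x, y) * p
      + pdy (pdy (pdy f)) (x, y) * p ^ 2 := by
  obtain ⟨hxx, hxy, hyy⟩ := contDiff_second_partials hf
  replace hxx := hasDerivAt_pdy (q := (x, y)) (hxx.differentiable one_ne_zero _)
  replace hxy := hasDerivAt_pdy (q := (x, y)) (hxy.differentiable one_ne_zero _)
  replace hyy := hasDerivAt_pdy (q := (x, y)) (hyy.differentiable one_ne_zero _)
  exact ((hxx.add ((hxy.const_mul 2).mul_const p)).add (hyy.mul_const (p ^ 2))).deriv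

lemma hasDerivAt_pDx_aIDE (hf : ContDiff ℝ 3 f) (x y p : ℝ) :
    HasDerivAt (fun t => pDx (aIDE f) (x, y, t))
      (2 * pdx (pdy (pdx f)) (x, y) + 2 * pdx (pdy (pdy f)) (x, y) * p) p := by
  simp only [pDx_aIDE hf]
  exact hasDerivAt_quadratic _ _ _ p

lemma hasDerivAt_pDy_aIDE (hf : ContDiff ℝ 3 f) (x y p : ℝ) :
    HasDerivAt (fun t => pDy (aIDE f) (x, y, t))
      (2 * pdy (pdy (pdx f)) (x, y) + 2 * pdy (pdy (pdy f)) (x, y) * p) p := by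
  simp only [pDy_aIDE hf]
  exact hasDerivAt_quadratic _ _ _ p

end AsymptoticIDE

/-- Lemma E: the flec-surface of `a^f` has vertical tangent plane at the
origin (`∂I/∂p (0) = 0`) iff `(a^f)_y(0,0,0) = 0`, equivalently `f_xxy(0,0) = 0`. -/
theorem lemmaE (f : ℝ × ℝ → ℝ) (hf : ContDiff ℝ (⊤ : ℕ∞) f) :
    (pDp (inflFun (aIDE f)) (0, 0, 0) = 0 ↔ pDy (aIDE f) (0, 0, 0) = 0) ∧
    (pDy (aIDE f) (0, 0, 0) = 0 ↔ pdy (pdx (pdx f)) (0, 0) = 0) := by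
  have hf3 : ContDiff ℝ 3 f := hf.of_le (by norm_cast)
  have hY : pDy (aIDE f) (0, 0, 0) = pdy (pdx (pdx f)) (0, 0) := by simp [pDy_aIDE hf3]
  have hI : pDp (inflFun (aIDE f)) (0, 0, 0) = 3 * pdy (pdx (pdx f)) (0, 0) := by
    rw [pDp_inflFun (hasDerivAt_pDx_aIDE hf3 0 0 0) (hasDerivAt_pDy_aIDE hf3 0 0 0), hY,
      pdx_pdy_comm (contDiff_pdx hf3 (by norm_num))]
    ring
  rw [hI, hY]
  exact ⟨mul_eq_zero_iff_left three_ne_zero, Iff.rfl⟩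
end
end

section
/- Fix ε ∈ ℝ and let f : ℝ² → ℝ be f(x,y) = (ε/2)(x² + y²) + (1/2)(x²y + y³) (the D₄⁺ flat-umbilic family). Then: (i) f_xx(x,y)·f_yy(x,y) − f_xy(x,y)² = 0 if and only if (3y + 2ε)² − 3x² = ε² (for ε ≠ 0, a hyperbola: the parabolic curve); (ii) with a^f(x,y,p) = f_xx + 2f_xy·p + f_yy·p² = (ε + y) + 2xp + (ε + 3y)p² and I(x,y,p) = (a^f)_x + p·(a^f)_y, one has I(x,y,p) = 3p(1 + p²), and the set {(x,y) ∈ ℝ² : ∃ p ∈ ℝ, a^f(x,y,p) = 0 and I(x,y,p) = 0} is exactly the line {y = −ε} (the real flecnodal curve); (iii) this line meets the curve (3y + 2ε)² − 3x² = ε² in exactly one point, (0, −ε) (the godron). -/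
/-!
Every function in sight is polynomial, and each partial derivative is the derivative of a
polynomial of degree at most three in one variable. The Hessian of `f` is
`(ε + y)(ε + 3y) - x²`, and `3(ε + y)(ε + 3y) = (3y + 2ε)² - ε²`. Since `a^f` is affine in
`(x, y)` with `(a^f)_x = 2p` and `(a^f)_y = 1 + 3p²`, the inflection function is `3p(1 + p²)`,
whose only real zero is `p = 0`; there `a^f = ε + y`, which cuts out the line `y = -ε`.
-/

noncomputable section

theorem hasDerivAt_cubic (a b c d t : ℝ) :
    HasDerivAt (fun t => a + b * t + c * t ^ 2 + d * t ^ 3) (b + 2 * c * t + 3 * d * t ^ 2) t := by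
  have h2 : HasDerivAt (fun t : ℝ => t ^ 2) (2 * t) t := by simpa using hasDerivAt_pow 2 t
  have h3 : HasDerivAt (fun t : ℝ => t ^ 3) (3 * t ^ 2) t := by simpa using hasDerivAt_pow 3 t
  exact (((((hasDerivAt_id t).const_mul b).const_add a).add (h2.const_mul c)).add
    (h3.const_mul d)).congr_deriv (by ring)

theorem deriv_eq_of_eq_cubic {g : ℝ → ℝ} {a b c d t v : ℝ}
    (hg : ∀ s, g s = a + b * s + c * s ^ 2 + d * s ^ 3) (hv : b + 2 * c * t + 3 * d * t ^ 2 = v) :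
    deriv g t = v := by
  rw [funext hg, (hasDerivAt_cubic a b c d t).deriv, hv]

def flatUmbilicD4Plus (ε : ℝ) (q : ℝ × ℝ) : ℝ :=
  ε / 2 * (q.1 ^ 2 + q.2 ^ 2) + 1 / 2 * (q.1 ^ 2 * q.2 + q.2 ^ 3)

namespace flatUmbilicD4Plus

variable (ε x y p : ℝ)

theorem pdx_apply : pdx (flatUmbilicD4Plus ε) (x, y) = (ε + y) * x :=
  deriv_eq_of_eq_cubic (a := ε / 2 * y ^ 2 + y ^ 3 / 2) (b := 0) (c := (ε + y) / 2) (d := 0)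
    (fun _ => by simp only [flatUmbilicD4Plus]; ring) (by ring)

theorem pdy_apply : pdy (flatUmbilicD4Plus ε) (x, y) = ε * y + x ^ 2 / 2 + 3 / 2 * y ^ 2 :=
  deriv_eq_of_eq_cubic (a := ε / 2 * x ^ 2) (b := x ^ 2 / 2) (c := ε / 2) (d := 1 / 2)
    (fun _ => by simp only [flatUmbilicD4Plus]; ring) (by ring)

theorem pdx_pdx_apply : pdx (pdx (flatUmbilicD4Plus ε)) (x, y) = ε + y :=
  deriv_eq_of_eq_cubic (a := 0) (b := ε + y) (c := 0) (d := 0)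
    (fun _ => by rw [pdx_apply]; ring) (by ring)

theorem pdy_pdx_apply : pdy (pdx (flatUmbilicD4Plus ε)) (x, y) = x :=
  deriv_eq_of_eq_cubic (a := ε * x) (b := x) (c := 0) (d := 0)
    (fun _ => by rw [pdx_apply]; ring) (by ring)

theorem pdy_pdy_apply : pdy (pdy (flatUmbilicD4Plus ε)) (x, y) = ε + 3 * y :=
  deriv_eq_of_eq_cubic (a := x ^ 2 / 2) (b := ε) (c := 3 / 2) (d := 0)
    (fun _ => by rw [pdy_apply]; ring) (by ring)

theorem hessian_eq_zero_iff :
    pdx (pdx (flatUmbilicD4Plus ε)) (x, y) * pdy (pdy (flatUmbilicD4Plus ε)) (x, y)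
        - pdy (pdx (flatUmbilicD4Plus ε)) (x, y) ^ 2 = 0 ↔
      (3 * y + 2 * ε) ^ 2 - 3 * x ^ 2 = ε ^ 2 := by
  rw [pdx_pdx_apply, pdy_pdy_apply, pdy_pdx_apply]
  constructor <;> intro h
  · linear_combination 3 * h
  · linear_combination h / 3

theorem aIDE_apply :
    aIDE (flatUmbilicD4Plus ε) (x, y, p) = (ε + y) + 2 * x * p + (ε + 3 * y) * p ^ 2 := by
  simp only [aIDE, pdx_pdx_apply, pdy_pdx_apply, pdy_pdy_apply]

theorem inflFun_aIDE_apply :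
    inflFun (aIDE (flatUmbilicD4Plus ε)) (x, y, p) = 3 * p * (1 + p ^ 2) := by
  have hx : pDx (aIDE (flatUmbilicD4Plus ε)) (x, y, p) = 2 * p :=
    deriv_eq_of_eq_cubic (a := ε + y + (ε + 3 * y) * p ^ 2) (b := 2 * p) (c := 0) (d := 0)
      (fun _ => by rw [aIDE_apply]; ring) (by ring)
  have hy : pDy (aIDE (flatUmbilicD4Plus ε)) (x, y, p) = 1 + 3 * p ^ 2 :=
    deriv_eq_of_eq_cubic (a := ε + 2 * x * p + ε * p ^ 2) (b := 1 + 3 * p ^ 2) (c := 0) (d := 0)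
      (fun _ => by rw [aIDE_apply]; ring) (by ring)
  rw [inflFun, hx, hy]
  ring

theorem flecnodal_eq :
    {q : ℝ × ℝ | ∃ p : ℝ, aIDE (flatUmbilicD4Plus ε) (q.1, q.2, p) = 0 ∧
        inflFun (aIDE (flatUmbilicD4Plus ε)) (q.1, q.2, p) = 0} = {q : ℝ × ℝ | q.2 = -ε} := by
  ext ⟨x, y⟩
  simp only [Set.mem_ofPred_eq, aIDE_apply, inflFun_aIDE_apply]
  constructor
  · rintro ⟨p, ha, hI⟩
    obtain rfl : p = 0 := by
      have : 1 + p ^ 2 ≠ 0 := by positivity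
      simpa [this] using hI
    linarith
  · intro hy
    exact ⟨0, by rw [hy]; ring, by ring⟩

end flatUmbilicD4Plus

theorem flecnodal_inter_parabolic_eq_singleton (ε : ℝ) :
    {q : ℝ × ℝ | q.2 = -ε ∧ (3 * q.2 + 2 * ε) ^ 2 - 3 * q.1 ^ 2 = ε ^ 2} = {((0 : ℝ), -ε)} := by
  ext ⟨x, y⟩
  simp only [Set.mem_ofPred_eq, Set.mem_singleton_iff, Prod.mk.injEq]
  constructor
  · rintro ⟨rfl, h⟩
    have hx : x ^ 2 = 0 := by linear_combination -h / 3
    exact ⟨pow_eq_zero_iff two_ne_zero |>.mp hx, rfl⟩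
  · rintro ⟨rfl, rfl⟩
    exact ⟨rfl, by ring⟩

/-- Theorem 5(b), the `D₄⁺` flat-umbilic family: for
`f(x,y) = (ε/2)(x² + y²) + (1/2)(x²y + y³)`:
(i) the parabolic curve is `(3y + 2ε)² − 3x² = ε²`;
(ii) `a^f(x,y,p) = (ε + y) + 2xp + (ε + 3y)p²`, the inflection function is
`I = 3p(1 + p²)`, and the real flecnodal curve is the line `{y = −ε}`;
(iii) this line meets the parabolic curve exactly at the godron `(0, −ε)`. -/
theorem D4plus_flat_umbilic (ε : ℝ)
    (f : ℝ × ℝ → ℝ)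
    (hf : ∀ x y : ℝ, f (x, y) =
      ε / 2 * (x ^ 2 + y ^ 2) + 1 / 2 * (x ^ 2 * y + y ^ 3)) :
    (∀ x y : ℝ,
      (pdx (pdx f) (x, y) * pdy (pdy f) (x, y) - (pdy (pdx f) (x, y)) ^ 2 = 0 ↔
        (3 * y + 2 * ε) ^ 2 - 3 * x ^ 2 = ε ^ 2)) ∧
    (∀ x y p : ℝ, aIDE f (x, y, p) = (ε + y) + 2 * x * p + (ε + 3 * y) * p ^ 2) ∧
    (∀ x y p : ℝ, inflFun (aIDE f) (x, y, p) = 3 * p * (1 + p ^ 2)) ∧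
    ({q : ℝ × ℝ | ∃ p : ℝ, aIDE f (q.1, q.2, p) = 0 ∧
        inflFun (aIDE f) (q.1, q.2, p) = 0} = {q : ℝ × ℝ | q.2 = -ε}) ∧
    ({q : ℝ × ℝ | q.2 = -ε ∧ (3 * q.2 + 2 * ε) ^ 2 - 3 * q.1 ^ 2 = ε ^ 2} =
        {((0 : ℝ), -ε)}) := by
  obtain rfl : f = flatUmbilicD4Plus ε := funext fun q => hf q.1 q.2
  exact ⟨flatUmbilicD4Plus.hessian_eq_zero_iff ε, flatUmbilicD4Plus.aIDE_apply ε,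
    flatUmbilicD4Plus.inflFun_aIDE_apply ε, flatUmbilicD4Plus.flecnodal_eq ε, flecnodal_inter_parabolic_eq_singleton ε⟩

end
end

section
/- Fix ε ∈ ℝ and let f : ℝ² → ℝ be f(x,y) = (ε/2)(x² − y²) + (1/2)(x²y − y³) (the D₄⁻ flat-umbilic family). Then: (i) f_xx(x,y)·f_yy(x,y) − f_xy(x,y)² = 0 if and only if (3y + 2ε)² + 3x² = ε² (for ε ≠ 0, an ellipse: the parabolic curve); (ii) with a^f(x,y,p) = (ε + y) + 2xp − (ε + 3y)p² and I(x,y,p) = (a^f)_x + p·(a^f)_y, one has I(x,y,p) = 3p(1 − p²), and the set {(x,y) ∈ ℝ² : ∃ p ∈ ℝ, a^f(x,y,p) = 0 and I(x,y,p) = 0} is exactly the union of the three lines {y = −ε} ∪ {y = x} ∪ {y = −x} (the flecnodal curve, one line for each of p = 0, 1, −1). -/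
noncomputable section

/-!
The family is a cubic, so its second partials are affine: `f_xx = ε + y`, `f_xy = x`,
`f_yy = -ε - 3y`, and the Hessian determinant is `-((3y + 2ε)² + 3x² - ε²) / 3`.
Hence `a^f` is affine in `(x, y)` with `x`- and `y`-slopes `2p` and `1 - 3p²`, so the
inflection function `3p(1 - p²)` depends on `p` alone. Its roots `p = 0, 1, -1` turn
`a^f = 0` into the lines `y = -ε`, `y = x`, `y = -x`.
-/

theorem deriv_cubic (a b c d x : ℝ) :
    deriv (fun t : ℝ => a * t ^ 3 + b * t ^ 2 + c * t + d) x = 3 * a * x ^ 2 + 2 * b * x + c := by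
  have h := ((((hasDerivAt_pow 3 x).const_mul a).add ((hasDerivAt_pow 2 x).const_mul b)).add
    ((hasDerivAt_id x).const_mul c)).add_const d
  exact h.deriv.trans (by push_cast; ring)

section PolynomialSections

variable {a b c d : ℝ}

theorem pdx_eq_of_cubic {f : ℝ × ℝ → ℝ} {q : ℝ × ℝ}
    (h : ∀ t, f (t, q.2) = a * t ^ 3 + b * t ^ 2 + c * t + d) :
    pdx f q = 3 * a * q.1 ^ 2 + 2 * b * q.1 + c := by
  rw [pdx, funext h, deriv_cubic]

theorem pdy_eq_of_cubic {f : ℝ × ℝ → ℝ} {q : ℝ × ℝ}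
    (h : ∀ t, f (q.1, t) = a * t ^ 3 + b * t ^ 2 + c * t + d) :
    pdy f q = 3 * a * q.2 ^ 2 + 2 * b * q.2 + c := by
  rw [pdy, funext h, deriv_cubic]

theorem pDx_eq_of_affine {F : ℝ × ℝ × ℝ → ℝ} {q : ℝ × ℝ × ℝ}
    (h : ∀ t, F (t, q.2.1, q.2.2) = c * t + d) : pDx F q = c := by
  rw [pDx, funext h]
  exact (((hasDerivAt_id' q.1).const_mul c).add_const d).deriv.trans (mul_one c)

theorem pDy_eq_of_affine {F : ℝ × ℝ × ℝ → ℝ} {q : ℝ × ℝ × ℝ}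
    (h : ∀ t, F (q.1, t, q.2.2) = c * t + d) : pDy F q = c := by
  rw [pDy, funext h]
  exact (((hasDerivAt_id' q.2.1).const_mul c).add_const d).deriv.trans (mul_one c)

end PolynomialSections

theorem mul_one_sub_sq_eq_zero_iff {R : Type*} [CommRing R] [NoZeroDivisors R] (p : R) :
    p * (1 - p ^ 2) = 0 ↔ p = 0 ∨ p = 1 ∨ p = -1 := by
  rw [mul_eq_zero, sub_eq_zero, eq_comm (a := (1 : R)), sq_eq_one_iff]

theorem parabolic_ellipse_iff (ε x y : ℝ) :
    (ε + y) * (-ε - 3 * y) - x ^ 2 = 0 ↔ (3 * y + 2 * ε) ^ 2 + 3 * x ^ 2 = ε ^ 2 := by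
  constructor <;> intro h
  · linear_combination (-3) * h
  · linear_combination (-1 / 3) * h

theorem exists_flecnodal_direction_iff (ε x y : ℝ) :
    (∃ p : ℝ, (ε + y) + 2 * x * p - (ε + 3 * y) * p ^ 2 = 0 ∧ 3 * p * (1 - p ^ 2) = 0) ↔
      y = -ε ∨ y = x ∨ y = -x := by
  have hroots (p : ℝ) : 3 * p * (1 - p ^ 2) = 0 ↔ p = 0 ∨ p = 1 ∨ p = -1 := by
    rw [mul_assoc, mul_eq_zero, mul_one_sub_sq_eq_zero_iff]; norm_num
  simp only [hroots, and_or_left, exists_or, exists_eq_right]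
  refine or_congr ?_ (or_congr ?_ ?_) <;> constructor <;> intro h <;> linarith

def flatUmbilicD4Minus (ε : ℝ) (q : ℝ × ℝ) : ℝ :=
  ε / 2 * (q.1 ^ 2 - q.2 ^ 2) + 1 / 2 * (q.1 ^ 2 * q.2 - q.2 ^ 3)

namespace flatUmbilicD4Minus

variable (ε x y p : ℝ)

theorem pdx_eq : pdx (flatUmbilicD4Minus ε) (x, y) = (ε + y) * x := by
  rw [pdx_eq_of_cubic (a := 0) (b := (ε + y) / 2) (c := 0) (d := -(ε / 2) * y ^ 2 - y ^ 3 / 2)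
    fun t => by simp only [flatUmbilicD4Minus]; ring]
  ring

theorem pdy_eq : pdy (flatUmbilicD4Minus ε) (x, y) = -ε * y + x ^ 2 / 2 - 3 / 2 * y ^ 2 := by
  rw [pdy_eq_of_cubic (a := -1 / 2) (b := -(ε / 2)) (c := x ^ 2 / 2) (d := ε / 2 * x ^ 2)
    fun t => by simp only [flatUmbilicD4Minus]; ring]
  ring

theorem pdx_pdx_eq : pdx (pdx (flatUmbilicD4Minus ε)) (x, y) = ε + y := by
  rw [pdx_eq_of_cubic (a := 0) (b := 0) (c := ε + y) (d := 0) fun t => by rw [pdx_eq]; ring]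
  ring

theorem pdy_pdx_eq : pdy (pdx (flatUmbilicD4Minus ε)) (x, y) = x := by
  rw [pdy_eq_of_cubic (a := 0) (b := 0) (c := x) (d := ε * x) fun t => by rw [pdx_eq]; ring]
  ring

theorem pdy_pdy_eq : pdy (pdy (flatUmbilicD4Minus ε)) (x, y) = -ε - 3 * y := by
  rw [pdy_eq_of_cubic (a := 0) (b := -3 / 2) (c := -ε) (d := x ^ 2 / 2)
    fun t => by rw [pdy_eq]; ring]
  ring

theorem aIDE_eq :
    aIDE (flatUmbilicD4Minus ε) (x, y, p) = (ε + y) + 2 * x * p - (ε + 3 * y) * p ^ 2 := by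
  rw [aIDE, pdx_pdx_eq, pdy_pdx_eq, pdy_pdy_eq]; ring

theorem inflFun_aIDE_eq :
    inflFun (aIDE (flatUmbilicD4Minus ε)) (x, y, p) = 3 * p * (1 - p ^ 2) := by
  rw [inflFun, pDx_eq_of_affine (c := 2 * p) (d := (ε + y) - (ε + 3 * y) * p ^ 2)
      fun t => by rw [aIDE_eq]; ring,
    pDy_eq_of_affine (c := 1 - 3 * p ^ 2) (d := ε + 2 * x * p - ε * p ^ 2)
      fun t => by rw [aIDE_eq]; ring]
  ring

end flatUmbilicD4Minus

/-- Theorem 5(a), the `D₄⁻` flat-umbilic family: for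
`f(x,y) = (ε/2)(x² − y²) + (1/2)(x²y − y³)`:
(i) the parabolic curve is `(3y + 2ε)² + 3x² = ε²`;
(ii) `a^f(x,y,p) = (ε + y) + 2xp − (ε + 3y)p²`, the inflection function is
`I = 3p(1 − p²)`, and the flecnodal curve is the union of the three lines
`{y = −ε} ∪ {y = x} ∪ {y = −x}` (one for each of `p = 0, 1, −1`). -/
theorem D4minus_flat_umbilic (ε : ℝ)
    (f : ℝ × ℝ → ℝ)
    (hf : ∀ x y : ℝ, f (x, y) =
      ε / 2 * (x ^ 2 - y ^ 2) + 1 / 2 * (x ^ 2 * y - y ^ 3)) :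
    (∀ x y : ℝ,
      (pdx (pdx f) (x, y) * pdy (pdy f) (x, y) - (pdy (pdx f) (x, y)) ^ 2 = 0 ↔
        (3 * y + 2 * ε) ^ 2 + 3 * x ^ 2 = ε ^ 2)) ∧
    (∀ x y p : ℝ, aIDE f (x, y, p) = (ε + y) + 2 * x * p - (ε + 3 * y) * p ^ 2) ∧
    (∀ x y p : ℝ, inflFun (aIDE f) (x, y, p) = 3 * p * (1 - p ^ 2)) ∧
    ({q : ℝ × ℝ | ∃ p : ℝ, aIDE f (q.1, q.2, p) = 0 ∧
        inflFun (aIDE f) (q.1, q.2, p) = 0} =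
      {q : ℝ × ℝ | q.2 = -ε} ∪ {q : ℝ × ℝ | q.2 = q.1} ∪ {q : ℝ × ℝ | q.2 = -q.1}) := by
  obtain rfl : f = flatUmbilicD4Minus ε := funext fun q => hf q.1 q.2
  refine ⟨fun x y => ?_, flatUmbilicD4Minus.aIDE_eq ε, flatUmbilicD4Minus.inflFun_aIDE_eq ε, ?_⟩
  · rw [flatUmbilicD4Minus.pdx_pdx_eq, flatUmbilicD4Minus.pdy_pdy_eq,
      flatUmbilicD4Minus.pdy_pdx_eq]
    exact parabolic_ellipse_iff ε x y
  · ext ⟨x, y⟩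
    simp only [Set.mem_ofPred_eq, Set.mem_union, flatUmbilicD4Minus.aIDE_eq,
      flatUmbilicD4Minus.inflFun_aIDE_eq, or_assoc]
    exact exists_flecnodal_direction_iff ε x y
end
end

section
/- Fix ε ∈ ℝ, ε ≠ 0, and consider the ellipse E = {(x,y) ∈ ℝ² : (3y + 2ε)² + 3x² = ε²} and the three lines L₀ = {y = −ε}, L₊ = {y = x}, L₋ = {y = −x}. Then each line meets E in exactly one point: L₀ ∩ E = {(0, −ε)}, L₊ ∩ E = {(−ε/2, −ε/2)}, L₋ ∩ E = {(ε/2, −ε/2)} (the three lines are tangent to the ellipse at these three points, the godrons). Moreover the three lines intersect pairwise in the three distinct points (0,0), (−ε, −ε), (ε, −ε) (the three hyperbonodes). -/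
/-- configuration in the `D₄⁻` family: for `ε ≠ 0`, each of the three
flecnodal lines `y = −ε`, `y = x`, `y = −x` meets the parabolic ellipse
`(3y + 2ε)² + 3x² = ε²` in exactly one point (the three godrons), and the three lines
intersect pairwise in the three distinct points `(0,0)`, `(−ε,−ε)`, `(ε,−ε)`
(the three hyperbonodes). -/
theorem three_godrons_three_hyperbonodes (ε : ℝ) (hε : ε ≠ 0) :
    ({q : ℝ × ℝ | q.2 = -ε} ∩ {q : ℝ × ℝ | (3 * q.2 + 2 * ε) ^ 2 + 3 * q.1 ^ 2 = ε ^ 2}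
        = {((0 : ℝ), -ε)}) ∧
    ({q : ℝ × ℝ | q.2 = q.1} ∩ {q : ℝ × ℝ | (3 * q.2 + 2 * ε) ^ 2 + 3 * q.1 ^ 2 = ε ^ 2}
        = {(-ε / 2, -ε / 2)}) ∧
    ({q : ℝ × ℝ | q.2 = -q.1} ∩ {q : ℝ × ℝ | (3 * q.2 + 2 * ε) ^ 2 + 3 * q.1 ^ 2 = ε ^ 2}
        = {(ε / 2, -ε / 2)}) ∧
    ({q : ℝ × ℝ | q.2 = -ε} ∩ {q : ℝ × ℝ | q.2 = q.1} = {(-ε, -ε)}) ∧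
    ({q : ℝ × ℝ | q.2 = -ε} ∩ {q : ℝ × ℝ | q.2 = -q.1} = {(ε, -ε)}) ∧
    ({q : ℝ × ℝ | q.2 = q.1} ∩ {q : ℝ × ℝ | q.2 = -q.1} = {((0 : ℝ), (0 : ℝ))}) ∧
    (((0 : ℝ), (0 : ℝ)) ≠ (-ε, -ε) ∧ ((0 : ℝ), (0 : ℝ)) ≠ (ε, -ε) ∧
      ((-ε, -ε) : ℝ × ℝ) ≠ (ε, -ε)) := by
  refine ⟨?_, ?_, ?_, ?_, ?_, ?_, ?_, ?_, ?_⟩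
  · ext ⟨x, y⟩
    simp only [Set.mem_inter_iff, Set.mem_setOf_eq, Set.mem_singleton_iff, Prod.mk.injEq]
    constructor
    · rintro ⟨hy, he⟩
      subst hy
      constructor
      · nlinarith [sq_nonneg x]
      · rfl
    · rintro ⟨hx, hy⟩; subst hx; subst hy; constructor <;> ring
  · ext ⟨x, y⟩
    simp only [Set.mem_inter_iff, Set.mem_setOf_eq, Set.mem_singleton_iff, Prod.mk.injEq]
    constructor
    · rintro ⟨hy, he⟩
      rw [hy] at he
      have hx : x = -ε / 2 := by nlinarith [sq_nonneg (2 * x + ε)]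
      exact ⟨hx, hy.trans hx⟩
    · rintro ⟨hx, hy⟩; subst hx; subst hy; constructor
      · ring
      · ring
  · ext ⟨x, y⟩
    simp only [Set.mem_inter_iff, Set.mem_setOf_eq, Set.mem_singleton_iff, Prod.mk.injEq]
    constructor
    · rintro ⟨hy, he⟩
      rw [hy] at he
      have hx : x = ε / 2 := by nlinarith [sq_nonneg (2 * x - ε)]
      refine ⟨hx, by rw [hy, hx]; ring⟩
    · rintro ⟨hx, hy⟩; subst hx; subst hy; constructor
      · ring
      · ring
  · ext ⟨x, y⟩
    simp only [Set.mem_inter_iff, Set.mem_setOf_eq, Set.mem_singleton_iff, Prod.mk.injEq]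
    constructor
    · rintro ⟨h1, h2⟩; exact ⟨by linarith, h1⟩
    · rintro ⟨hx, hy⟩; subst hx; subst hy; exact ⟨rfl, rfl⟩
  · ext ⟨x, y⟩
    simp only [Set.mem_inter_iff, Set.mem_setOf_eq, Set.mem_singleton_iff, Prod.mk.injEq]
    constructor
    · rintro ⟨h1, h2⟩; exact ⟨by linarith, h1⟩
    · rintro ⟨hx, hy⟩; subst hx; subst hy; exact ⟨rfl, by ring⟩
  · ext ⟨x, y⟩
    simp only [Set.mem_inter_iff, Set.mem_setOf_eq, Set.mem_singleton_iff, Prod.mk.injEq]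
    constructor
    · rintro ⟨h1, h2⟩
      have hx : x = 0 := by linarith
      exact ⟨hx, by linarith⟩
    · rintro ⟨hx, hy⟩; subst hx; subst hy; exact ⟨rfl, by ring⟩
  · intro h
    have h1 : (0 : ℝ) = -ε := congrArg Prod.fst h
    exact hε (by linarith)
  · intro h
    have h1 : (0 : ℝ) = ε := congrArg Prod.fst h
    exact hε (by linarith)
  · intro h
    have h1 : -ε = ε := congrArg Prod.fst h
    exact hε (by linarith)
end
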